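/- Let 0 < h ≤ 1 and f : ℝ^{n−1} → [0,1] measurable with ∫ f dγ^{n−1} = h. Then ∫ (q(h) − q(f(x))) dγ^{n−1}(x) ≥ ∫ (f(x) − h)² dγ^{n−1}(x). -/

import Mathlib

/-!
`Q = phi ∘ Psi` satisfies `Q' = -Psi` and `Q'' = -1 / phi ∘ Psi ≤ -√(2π) < -2` on `(0, 1)`,
so `s ↦ Q s + s ^ 2` is concave on `[0, 1]` and lies below its tangent line at `h`:
`(s - h) ^ 2 ≤ Q h - Q s - Psi h * (s - h)`. Evaluating at `s = f x` and integrating against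
any probability measure, the linear term vanishes because `∫ f = h`.
-/

open MeasureTheory ProbabilityTheory Real Set Filter

noncomputable def gamma1 : Measure ℝ := gaussianReal 0 1

noncomputable def Phi (t : ℝ) : ℝ :=
  ∫ s in Set.Iic t, (Real.sqrt (2 * Real.pi))⁻¹ * Real.exp (-s ^ 2 / 2)

noncomputable def Psi : ℝ → ℝ := Function.invFun Phi
noncomputable def Q (s : ℝ) : ℝ :=
  if 0 < s ∧ s < 1 then (Real.sqrt (2 * Real.pi))⁻¹ * Real.exp (-(Psi s) ^ 2 / 2) else 0

noncomputable def stdGaussian (n : ℕ) : Measure (EuclideanSpace ℝ (Fin n)) :=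
  Measure.map (MeasurableEquiv.toLp 2 (Fin n → ℝ))
    (Measure.pi fun _ : Fin n => gaussianReal 0 1)

open Topology

noncomputable def phi (t : ℝ) : ℝ := (√(2 * π))⁻¹ * exp (-t ^ 2 / 2)

lemma phi_eq_gaussianPDFReal : phi = gaussianPDFReal 0 1 := by
  ext t
  simp [phi, gaussianPDFReal]

lemma phi_pos (t : ℝ) : 0 < phi t := by
  unfold phi
  positivity

lemma continuous_phi : Continuous phi := by
  unfold phi
  fun_prop

lemma hasDerivAt_phi (t : ℝ) : HasDerivAt phi (-t * phi t) t := by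
  have h_exponent : HasDerivAt (fun u : ℝ => -u ^ 2 / 2) (-t) t :=
    ((hasDerivAt_pow 2 t).neg.div_const 2).congr_deriv (by ring)
  exact (h_exponent.exp.const_mul (√(2 * π))⁻¹).congr_deriv (by unfold phi; ring)

lemma phi_le_half (t : ℝ) : phi t ≤ 1 / 2 := by
  have h_sqrt : 2 ≤ √(2 * π) := Real.le_sqrt_of_sq_le (by nlinarith [pi_gt_three])
  have h_exp : exp (-t ^ 2 / 2) ≤ 1 := exp_le_one_iff.2 (by nlinarith [sq_nonneg t])
  calc phi t ≤ (√(2 * π))⁻¹ * 1 := by unfold phi; gcongr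
    _ ≤ 1 / 2 := by rw [mul_one, one_div]; gcongr

lemma tendsto_phi_cocompact : Tendsto phi (cocompact ℝ) (𝓝 0) := by
  have := (tendsto_rpow_abs_mul_exp_neg_mul_sq_cocompact (a := 1 / 2) (by norm_num) 0).const_mul
    (√(2 * π))⁻¹
  rw [mul_zero] at this
  refine this.congr fun t => ?_
  simp only [phi, rpow_zero, one_mul]
  ring_nf

lemma Phi_eq_integral_phi (t : ℝ) : Phi t = ∫ s in Iic t, phi s := rfl

lemma Phi_eq_cdf : Phi = cdf (gaussianReal 0 1) := by
  ext t
  rw [cdf_eq_real, measureReal_def, gaussianReal_apply_eq_integral 0 one_ne_zero,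
    ENNReal.toReal_ofReal (integral_nonneg fun _ => gaussianPDFReal_nonneg _ _ _),
    Phi_eq_integral_phi, phi_eq_gaussianPDFReal]

lemma hasDerivAt_Phi (t : ℝ) : HasDerivAt Phi (phi t) t := by
  have h_int : Integrable phi := phi_eq_gaussianPDFReal ▸ integrable_gaussianPDFReal 0 1
  have h_ftc : HasDerivAt (fun u => Phi 0 + ∫ s in (0 : ℝ)..u, phi s) (phi t) t :=
    (intervalIntegral.integral_hasDerivAt_right h_int.intervalIntegrable
      (continuous_phi.stronglyMeasurableAtFilter _ _) continuous_phi.continuousAt).const_add _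
  refine h_ftc.congr_of_eventuallyEq (Eventually.of_forall fun u => ?_)
  dsimp only
  rw [Phi_eq_integral_phi, Phi_eq_integral_phi,
    ← intervalIntegral.integral_Iic_sub_Iic h_int.integrableOn h_int.integrableOn]
  ring

lemma strictMono_Phi : StrictMono Phi :=
  strictMono_of_hasDerivAt_pos hasDerivAt_Phi phi_pos

lemma continuous_Phi : Continuous Phi :=
  continuous_iff_continuousAt.2 fun t => (hasDerivAt_Phi t).continuousAt

lemma Phi_sub_le_sub_div_two {x y : ℝ} (hxy : x ≤ y) : Phi y - Phi x ≤ (y - x) / 2 := by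
  have : Monotone fun t => t / 2 - Phi t :=
    monotone_of_hasDerivAt_nonneg
      (fun t => ((hasDerivAt_id t).div_const 2).sub (hasDerivAt_Phi t))
      fun t => by simpa using phi_le_half t
  linarith [this hxy]

lemma Phi_mem_Ioo (t : ℝ) : Phi t ∈ Ioo 0 1 := by
  have h_lt := strictMono_Phi (sub_one_lt t)
  have h_gt := strictMono_Phi (lt_add_one t)
  rw [Phi_eq_cdf] at *
  exact ⟨(cdf_nonneg _ _).trans_lt h_lt, h_gt.trans_le (cdf_le_one _ _)⟩

lemma Phi_Psi {s : ℝ} (hs : s ∈ Ioo 0 1) : Phi (Psi s) = s := by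
  refine Function.invFun_eq (mem_range_of_exists_le_of_exists_ge continuous_Phi ?_ ?_)
  · rw [Phi_eq_cdf]
    exact ((tendsto_cdf_atBot _).eventually_lt_const hs.1).exists.imp fun _ => le_of_lt
  · rw [Phi_eq_cdf]
    exact ((tendsto_cdf_atTop _).eventually_const_lt hs.2).exists.imp fun _ => le_of_lt

lemma Psi_Phi (t : ℝ) : Psi (Phi t) = t :=
  Function.leftInverse_invFun strictMono_Phi.injective t

lemma Psi_lt_iff {s : ℝ} (hs : s ∈ Ioo 0 1) {t : ℝ} : Psi s < t ↔ s < Phi t := by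
  rw [← strictMono_Phi.lt_iff_lt, Phi_Psi hs]

lemma lt_Psi_iff {s : ℝ} (hs : s ∈ Ioo 0 1) {t : ℝ} : t < Psi s ↔ Phi t < s := by
  rw [← strictMono_Phi.lt_iff_lt, Phi_Psi hs]

lemma strictMonoOn_Psi : StrictMonoOn Psi (Ioo 0 1) := fun a ha b hb hab => by
  rwa [Psi_lt_iff ha, Phi_Psi hb]

lemma continuousAt_Psi {s : ℝ} (hs : s ∈ Ioo 0 1) : ContinuousAt Psi s := by
  refine strictMonoOn_Psi.continuousAt_of_image_mem_nhds (Ioo_mem_nhds hs.1 hs.2) ?_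
  exact Filter.mem_of_superset univ_mem fun t _ => ⟨Phi t, Phi_mem_Ioo t, Psi_Phi t⟩

lemma hasDerivAt_Psi {s : ℝ} (hs : s ∈ Ioo 0 1) : HasDerivAt Psi (phi (Psi s))⁻¹ s :=
  (hasDerivAt_Phi (Psi s)).of_local_left_inverse (continuousAt_Psi hs) (phi_pos _).ne'
    (eventually_of_mem (Ioo_mem_nhds hs.1 hs.2) fun _ => Phi_Psi)

lemma tendsto_Psi_nhdsGT_zero : Tendsto Psi (𝓝[>] 0) atBot := by
  refine tendsto_atBot.2 fun t => ?_
  filter_upwards [Ioo_mem_nhdsGT (Phi_mem_Ioo t).1] with s hs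
  exact ((Psi_lt_iff ⟨hs.1, hs.2.trans (Phi_mem_Ioo t).2⟩).2 hs.2).le

lemma tendsto_Psi_nhdsLT_one : Tendsto Psi (𝓝[<] 1) atTop := by
  refine tendsto_atTop.2 fun t => ?_
  filter_upwards [Ioo_mem_nhdsLT (Phi_mem_Ioo t).2] with s hs
  exact ((lt_Psi_iff ⟨(Phi_mem_Ioo t).1.trans hs.1, hs.2⟩).2 hs.1).le

-- The integrated form of `Psi' = 1 / phi ∘ Psi ≥ 2`, i.e. of `Q'' ≤ -2`.
lemma two_mul_sub_le_Psi_sub {a b : ℝ} (ha : a ∈ Ioo 0 1) (hb : b ∈ Ioo 0 1) (hab : a ≤ b) :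
    2 * (b - a) ≤ Psi b - Psi a := by
  have h_le : Psi a ≤ Psi b := strictMonoOn_Psi.monotoneOn ha hb hab
  have := Phi_sub_le_sub_div_two h_le
  rw [Phi_Psi ha, Phi_Psi hb] at this
  linarith

lemma Q_eq_phi_Psi {s : ℝ} (hs : s ∈ Ioo 0 1) : Q s = phi (Psi s) := if_pos hs

lemma Q_zero : Q 0 = 0 := by simp [Q]

lemma Q_one : Q 1 = 0 := by simp [Q]

lemma hasDerivAt_Q {s : ℝ} (hs : s ∈ Ioo 0 1) : HasDerivAt Q (-Psi s) s := by
  have h_comp := (hasDerivAt_phi (Psi s)).comp s (hasDerivAt_Psi hs)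
  rw [mul_assoc, mul_inv_cancel₀ (phi_pos _).ne', mul_one] at h_comp
  exact h_comp.congr_of_eventuallyEq
    (eventually_of_mem (Ioo_mem_nhds hs.1 hs.2) fun _ => Q_eq_phi_Psi)

lemma continuousOn_Q : ContinuousOn Q (Icc 0 1) := by
  have h_phi_atBot := tendsto_phi_cocompact.mono_left atBot_le_cocompact
  have h_phi_atTop := tendsto_phi_cocompact.mono_left atTop_le_cocompact
  intro s hs
  rcases eq_endpoints_or_mem_Ioo_of_mem_Icc hs with rfl | rfl | hs
  · have : Tendsto Q (𝓝[>] 0) (𝓝 (Q 0)) := by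
      rw [Q_zero]
      refine (h_phi_atBot.comp tendsto_Psi_nhdsGT_zero).congr' ?_
      filter_upwards [Ioo_mem_nhdsGT zero_lt_one] with s hs using (Q_eq_phi_Psi hs).symm
    exact (continuousWithinAt_Ioi_iff_Ici.1 this).mono Icc_subset_Ici_self
  · have : Tendsto Q (𝓝[<] 1) (𝓝 (Q 1)) := by
      rw [Q_one]
      refine (h_phi_atTop.comp tendsto_Psi_nhdsLT_one).congr' ?_
      filter_upwards [Ioo_mem_nhdsLT zero_lt_one] with s hs using (Q_eq_phi_Psi hs).symm
    exact (continuousWithinAt_Iio_iff_Iic.1 this).mono Icc_subset_Iic_self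
  · exact (hasDerivAt_Q hs).continuousAt.continuousWithinAt

lemma hasDerivAt_Q_add_sq {s : ℝ} (hs : s ∈ Ioo 0 1) :
    HasDerivAt (fun u => Q u + u ^ 2) (-Psi s + 2 * s) s := by
  have := (hasDerivAt_Q hs).add (hasDerivAt_pow 2 s)
  exact this.congr_deriv (by push_cast; ring)

lemma concaveOn_Q_add_sq : ConcaveOn ℝ (Icc 0 1) fun s => Q s + s ^ 2 := by
  refine AntitoneOn.concaveOn_of_deriv (convex_Icc 0 1)
    (continuousOn_Q.add (continuous_pow 2).continuousOn) ?_ ?_ <;> rw [interior_Icc]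
  · exact fun s hs => (hasDerivAt_Q_add_sq hs).differentiableAt.differentiableWithinAt
  · intro a ha b hb hab
    rw [(hasDerivAt_Q_add_sq ha).deriv, (hasDerivAt_Q_add_sq hb).deriv]
    linarith [two_mul_sub_le_Psi_sub ha hb hab]

lemma ConcaveOn.le_add_mul_sub_of_hasDerivAt {S : Set ℝ} {f : ℝ → ℝ} {x y f' : ℝ}
    (hf : ConcaveOn ℝ S f) (hx : x ∈ S) (hy : y ∈ S) (hf' : HasDerivAt f f' x) :
    f y ≤ f x + f' * (y - x) := by
  rcases lt_trichotomy x y with hxy | rfl | hxy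
  · have := hf.slope_le_of_hasDerivAt hx hy hxy hf'
    rw [slope_def_field, div_le_iff₀ (sub_pos.2 hxy)] at this
    linarith
  · simp
  · have := hf.le_slope_of_hasDerivAt hy hx hxy hf'
    rw [slope_def_field, le_div_iff₀ (sub_pos.2 hxy)] at this
    linarith

lemma sq_sub_le_Q_sub_Q_sub_Psi_mul {h s : ℝ} (hh : h ∈ Ioo 0 1) (hs : s ∈ Icc 0 1) :
    (s - h) ^ 2 ≤ Q h - Q s - Psi h * (s - h) := by
  have := concaveOn_Q_add_sq.le_add_mul_sub_of_hasDerivAt (Ioo_subset_Icc_self hh) hs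
    (hasDerivAt_Q_add_sq hh)
  linarith

lemma Q_mem_Icc (s : ℝ) : Q s ∈ Icc 0 (1 / 2) := by
  by_cases hs : s ∈ Ioo 0 1
  · rw [Q_eq_phi_Psi hs]
    exact ⟨(phi_pos _).le, phi_le_half _⟩
  · rw [show Q s = 0 from if_neg hs]
    norm_num

lemma aemeasurable_Q_comp {α : Type*} [MeasurableSpace α] {μ : Measure α} {f : α → ℝ}
    (hf : AEMeasurable f μ) (hf01 : ∀ x, f x ∈ Icc 0 1) : AEMeasurable (fun x => Q (f x)) μ :=
  (continuousOn_iff_continuous_domRestrict.1 continuousOn_Q).measurable.comp_aemeasurable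
    (hf.subtype_mk (hfs := hf01))

lemma integral_sq_sub_le_integral_Q_sub {α : Type*} [MeasurableSpace α] {μ : Measure α}
    [IsProbabilityMeasure μ] {f : α → ℝ} {h : ℝ} (hh0 : 0 < h) (hh1 : h ≤ 1)
    (hf : AEMeasurable f μ) (hf01 : ∀ x, f x ∈ Icc 0 1) (hint : ∫ x, f x ∂μ = h) :
    ∫ x, (f x - h) ^ 2 ∂μ ≤ ∫ x, (Q h - Q (f x)) ∂μ := by
  have hf_int : Integrable f μ := .of_mem_Icc 0 1 hf (ae_of_all _ hf01)
  have hQf_int : Integrable (fun x => Q h - Q (f x)) μ :=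
    (integrable_const _).sub <|
      .of_mem_Icc 0 (1 / 2) (aemeasurable_Q_comp hf hf01) (ae_of_all _ fun _ => Q_mem_Icc _)
  rcases hh1.lt_or_eq with hh1 | rfl
  · have hlin_int : Integrable (fun x => Psi h * (f x - h)) μ :=
      (hf_int.sub (integrable_const h)).const_mul _
    calc ∫ x, (f x - h) ^ 2 ∂μ ≤ ∫ x, (Q h - Q (f x) - Psi h * (f x - h)) ∂μ :=
          integral_mono_of_nonneg (ae_of_all _ fun _ => sq_nonneg _) (hQf_int.sub hlin_int)
            (ae_of_all _ fun x => sq_sub_le_Q_sub_Q_sub_Psi_mul ⟨hh0, hh1⟩ (hf01 x))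
      _ = ∫ x, (Q h - Q (f x)) ∂μ - Psi h * ∫ x, (f x - h) ∂μ := by
          rw [integral_sub hQf_int hlin_int, integral_const_mul]
      _ = ∫ x, (Q h - Q (f x)) ∂μ := by
          simp [integral_sub hf_int (integrable_const h), hint]
  -- At `h = 1` there is no tangent line, but then `f = 1` almost everywhere.
  · have hf_ae : f =ᵐ[μ] 1 :=
      (integral_eq_iff_of_ae_le hf_int (integrable_const 1) (ae_of_all _ fun x => (hf01 x).2)).1
        (by simp [hint])
    refine le_of_eq (integral_congr_ae ?_)
    filter_upwards [hf_ae] with x hx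
    simp [hx]

instance isProbabilityMeasure_stdGaussian (n : ℕ) : IsProbabilityMeasure (stdGaussian n) :=
  Measure.isProbabilityMeasure_map (MeasurableEquiv.toLp 2 (Fin n → ℝ)).measurable.aemeasurable

theorem q_deficit_dominates_variance (n : ℕ) (h : ℝ) (hh0 : 0 < h) (hh1 : h ≤ 1)
    (f : EuclideanSpace ℝ (Fin n) → ℝ) (hf : Measurable f)
    (hf01 : ∀ x, f x ∈ Set.Icc (0 : ℝ) 1)
    (hint : ∫ x, f x ∂stdGaussian n = h) :
    ∫ x, (f x - h) ^ 2 ∂stdGaussian n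
      ≤ ∫ x, (Q h - Q (f x)) ∂stdGaussian n :=
  integral_sq_sub_le_integral_Q_sub hh0 hh1 hf.aemeasurable hf01 hint
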